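/- arXiv:2010.07382 — 4 statements merged into one kernel-verified Lean document; each statement's English description precedes it below -/
import Mathlib

section
/- The normalized maximum likelihood distribution q_NML(y) = sup_{p∈M} p(y)/Z_M minimizes the maximal regret: for every probability distribution q on Y, sup_{p∈M} max_{y∈Y} ln(p(y)/q(y)) ≥ ln Z_M, with equality for q = q_NML. -/
/-!
Write `s y = sup_{p ∈ M} p y`, so `Z = Σ_y s y`. If every `p ∈ M` satisfies
`max_y ln (p y / q y) ≤ R`, then `p y ≤ q y e^R` for all `p` and `y`, hence `s y ≤ q y e^R`
and, summing over `y`, `Z ≤ e^R`: no `q` has maximal regret below `ln Z`. For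
`q = s / Z` every ratio `p y / q y = Z p y / s y` is at most `Z`, so the maximal regret of the
NML distribution is at most `ln Z`, and by the first part it is exactly `ln Z`: that part
only needs `q` to vanish where every `p ∈ M` does, which the NML distribution does.
-/

open Finset Real

lemma Real.log_le_log_of_nonneg_of_one_le {x y : ℝ} (hx : 0 ≤ x) (hxy : x ≤ y)
    (hy : 1 ≤ y) : log x ≤ log y := by
  obtain rfl | hx := hx.eq_or_lt
  · simpa using log_nonneg hy
  · exact log_le_log hx hxy

section MaxLogRatio

variable {Y : Type*} [Fintype Y] [Nonempty Y]

/-- A `y` with `p y = 0` or `q y = 0` contributes `log 0 = 0` to this maximum. -/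
noncomputable def maxLogRatio (p q : Y → ℝ) : ℝ :=
  univ.sup' univ_nonempty fun y => log (p y / q y)

lemma log_div_le_maxLogRatio (p q : Y → ℝ) (y : Y) : log (p y / q y) ≤ maxLogRatio p q :=
  le_sup' (fun y => log (p y / q y)) (mem_univ y)

lemma le_mul_exp_maxLogRatio {p q : Y → ℝ} (hq : ∀ y, 0 ≤ q y)
    (hpq : ∀ y, q y = 0 → p y = 0) (y : Y) : p y ≤ q y * exp (maxLogRatio p q) := by
  obtain hqy | hqy := (hq y).eq_or_lt
  · simp [hpq y hqy.symm, ← hqy]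
  · have := le_exp_of_log_le (log_div_le_maxLogRatio p q y)
    rwa [div_le_iff₀ hqy, mul_comm] at this

lemma maxLogRatio_le_sup'_div {p q s : Y → ℝ} (hp : ∀ y, 0 ≤ p y) (hps : ∀ y, p y ≤ s y)
    (hq : ∀ y, 0 ≤ q y) : maxLogRatio p q ≤ univ.sup' univ_nonempty fun y => s y / q y := by
  refine sup'_le _ _ fun y _ => ?_
  calc log (p y / q y) ≤ p y / q y := log_le_self (div_nonneg (hp y) (hq y))
    _ ≤ s y / q y := div_le_div_of_nonneg_right (hps y) (hq y)
    _ ≤ _ := le_sup' (fun y => s y / q y) (mem_univ y)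

end MaxLogRatio

section ProbabilityFamily

variable {Y : Type*} {M : Set (Y → ℝ)}

noncomputable def maxLikelihood (M : Set (Y → ℝ)) (y : Y) : ℝ :=
  ⨆ p : M, (p : Y → ℝ) y

lemma maxLikelihood_nonneg (hM_nonneg : ∀ p ∈ M, ∀ y, 0 ≤ p y) (y : Y) :
    0 ≤ maxLikelihood M y :=
  Real.iSup_nonneg fun p => hM_nonneg p p.2 y

variable [Fintype Y]

noncomputable def nml (M : Set (Y → ℝ)) (y : Y) : ℝ :=
  maxLikelihood M y / ∑ y, maxLikelihood M y

lemma bddAbove_range_apply (hM_nonneg : ∀ p ∈ M, ∀ y, 0 ≤ p y)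
    (hM_sum : ∀ p ∈ M, ∑ y, p y = 1) (y : Y) :
    BddAbove (Set.range fun p : M => (p : Y → ℝ) y) := by
  refine ⟨1, ?_⟩
  rintro _ ⟨⟨p, hp⟩, rfl⟩
  calc p y ≤ ∑ y, p y := single_le_sum (fun y _ => hM_nonneg p hp y) (mem_univ y)
    _ = 1 := hM_sum p hp

lemma le_maxLikelihood (hM_nonneg : ∀ p ∈ M, ∀ y, 0 ≤ p y)
    (hM_sum : ∀ p ∈ M, ∑ y, p y = 1) {p : Y → ℝ} (hp : p ∈ M) (y : Y) :
    p y ≤ maxLikelihood M y :=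
  le_ciSup (bddAbove_range_apply hM_nonneg hM_sum y) (⟨p, hp⟩ : M)

lemma one_le_sum_maxLikelihood (hM_ne : M.Nonempty) (hM_nonneg : ∀ p ∈ M, ∀ y, 0 ≤ p y)
    (hM_sum : ∀ p ∈ M, ∑ y, p y = 1) : 1 ≤ ∑ y, maxLikelihood M y := by
  obtain ⟨p, hp⟩ := hM_ne
  rw [← hM_sum p hp]
  exact sum_le_sum fun y _ => le_maxLikelihood hM_nonneg hM_sum hp y

lemma sum_maxLikelihood_pos (hM_ne : M.Nonempty) (hM_nonneg : ∀ p ∈ M, ∀ y, 0 ≤ p y)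
    (hM_sum : ∀ p ∈ M, ∑ y, p y = 1) : 0 < ∑ y, maxLikelihood M y :=
  one_pos.trans_le (one_le_sum_maxLikelihood hM_ne hM_nonneg hM_sum)

lemma nml_nonneg (hM_nonneg : ∀ p ∈ M, ∀ y, 0 ≤ p y) (y : Y) : 0 ≤ nml M y :=
  div_nonneg (maxLikelihood_nonneg hM_nonneg y)
    (sum_nonneg fun y _ => maxLikelihood_nonneg hM_nonneg y)

lemma sum_nml (hM_ne : M.Nonempty) (hM_nonneg : ∀ p ∈ M, ∀ y, 0 ≤ p y)
    (hM_sum : ∀ p ∈ M, ∑ y, p y = 1) : ∑ y, nml M y = 1 := by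
  unfold nml
  rw [← sum_div, div_self]
  exact (sum_maxLikelihood_pos hM_ne hM_nonneg hM_sum).ne'

lemma eq_zero_of_nml_eq_zero (hM_ne : M.Nonempty) (hM_nonneg : ∀ p ∈ M, ∀ y, 0 ≤ p y)
    (hM_sum : ∀ p ∈ M, ∑ y, p y = 1) {p : Y → ℝ} (hp : p ∈ M) {y : Y} (hy : nml M y = 0) :
    p y = 0 := by
  rw [nml, div_eq_zero_iff,
    or_iff_left (sum_maxLikelihood_pos hM_ne hM_nonneg hM_sum).ne'] at hy
  exact le_antisymm (hy ▸ le_maxLikelihood hM_nonneg hM_sum hp y) (hM_nonneg p hp y)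

variable [Nonempty Y]

lemma bddAbove_range_maxLogRatio (hM_nonneg : ∀ p ∈ M, ∀ y, 0 ≤ p y)
    (hM_sum : ∀ p ∈ M, ∑ y, p y = 1) {q : Y → ℝ} (hq : ∀ y, 0 ≤ q y) :
    BddAbove (Set.range fun p : M => maxLogRatio (p : Y → ℝ) q) := by
  refine ⟨univ.sup' univ_nonempty fun y => maxLikelihood M y / q y, ?_⟩
  rintro _ ⟨⟨p, hp⟩, rfl⟩
  exact maxLogRatio_le_sup'_div (hM_nonneg p hp) (le_maxLikelihood hM_nonneg hM_sum hp) hq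

theorem log_sum_maxLikelihood_le_iSup_maxLogRatio (hM_ne : M.Nonempty)
    (hM_nonneg : ∀ p ∈ M, ∀ y, 0 ≤ p y) (hM_sum : ∀ p ∈ M, ∑ y, p y = 1)
    {q : Y → ℝ} (hq : ∀ y, 0 ≤ q y) (hq_sum : ∑ y, q y = 1)
    (hMq : ∀ p ∈ M, ∀ y, q y = 0 → p y = 0) :
    log (∑ y, maxLikelihood M y) ≤ ⨆ p : M, maxLogRatio (p : Y → ℝ) q := by
  have : Nonempty M := hM_ne.to_subtype
  set R := ⨆ p : M, maxLogRatio (p : Y → ℝ) q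
  have hsup_le : ∀ y, maxLikelihood M y ≤ q y * exp R := fun y =>
    ciSup_le fun ⟨p, hp⟩ => (le_mul_exp_maxLogRatio hq (hMq p hp) y).trans <|
      mul_le_mul_of_nonneg_left (exp_le_exp.2 <|
        le_ciSup (bddAbove_range_maxLogRatio hM_nonneg hM_sum hq) ⟨p, hp⟩) (hq y)
  refine (log_le_iff_le_exp (sum_maxLikelihood_pos hM_ne hM_nonneg hM_sum)).2 ?_
  calc ∑ y, maxLikelihood M y ≤ ∑ y, q y * exp R := sum_le_sum fun y _ => hsup_le y
    _ = exp R := by rw [← sum_mul, hq_sum, one_mul]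

lemma maxLogRatio_nml_le (hM_ne : M.Nonempty) (hM_nonneg : ∀ p ∈ M, ∀ y, 0 ≤ p y)
    (hM_sum : ∀ p ∈ M, ∑ y, p y = 1) {p : Y → ℝ} (hp : p ∈ M) :
    maxLogRatio p (nml M) ≤ log (∑ y, maxLikelihood M y) := by
  set Z := ∑ y, maxLikelihood M y
  have hZ : 1 ≤ Z := one_le_sum_maxLikelihood hM_ne hM_nonneg hM_sum
  refine sup'_le _ _ fun y _ => log_le_log_of_nonneg_of_one_le
    (div_nonneg (hM_nonneg p hp y) (nml_nonneg hM_nonneg y)) ?_ hZ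
  have hpy := le_maxLikelihood hM_nonneg hM_sum hp y
  rw [nml, div_div_eq_mul_div]
  obtain hs | hs := (maxLikelihood_nonneg hM_nonneg y).eq_or_lt
  · simp [← hs, zero_le_one.trans hZ]
  · rw [div_le_iff₀ hs, mul_comm]
    exact mul_le_mul_of_nonneg_left hpy (zero_le_one.trans hZ)

end ProbabilityFamily

/-- **The NML distribution minimizes maximal regret.**
`M` is a nonempty family of probability mass functions on the finite alphabet `Y`,
`Z = Σ_y sup_{p∈M} p y`, and `qNML y = (sup_{p∈M} p y) / Z`. Then for every (strictly
positive) probability distribution `q` on `Y`,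
`sup_{p∈M} max_y ln (p y / q y) ≥ ln Z`, and equality holds for `q = qNML`.
(For `q` vanishing at some `y` with `sup_{p∈M} p y > 0` the regret is `+∞`, so strict
positivity is the only nontrivial case.) -/
theorem nml_minimizes_maximal_regret
    {Y : Type*} [Fintype Y] [Nonempty Y]
    (M : Set (Y → ℝ)) (hM_ne : M.Nonempty)
    (hM_nonneg : ∀ p ∈ M, ∀ y, 0 ≤ p y) (hM_sum : ∀ p ∈ M, ∑ y, p y = 1)
    (Z : ℝ) (hZ : Z = ∑ y, ⨆ p : M, (p : Y → ℝ) y)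
    (qNML : Y → ℝ) (hqNML : ∀ y, qNML y = (⨆ p : M, (p : Y → ℝ) y) / Z) :
    (∀ q : Y → ℝ, (∀ y, 0 < q y) → ∑ y, q y = 1 →
      Real.log Z ≤ ⨆ p : M, Finset.univ.sup' Finset.univ_nonempty
        (fun y => Real.log ((p : Y → ℝ) y / q y))) ∧
    (⨆ p : M, Finset.univ.sup' Finset.univ_nonempty
        (fun y => Real.log ((p : Y → ℝ) y / qNML y))) = Real.log Z := by
  have : Nonempty M := hM_ne.to_subtype
  obtain rfl : Z = ∑ y, maxLikelihood M y := hZ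
  obtain rfl : qNML = nml M := funext hqNML
  refine ⟨fun q hq hq_sum => ?_, le_antisymm ?_ ?_⟩
  · exact log_sum_maxLikelihood_le_iSup_maxLogRatio hM_ne hM_nonneg hM_sum (fun y => (hq y).le)
      hq_sum fun p _ y hqy => absurd hqy (hq y).ne'
  · exact ciSup_le fun p => maxLogRatio_nml_le hM_ne hM_nonneg hM_sum p.2
  · exact log_sum_maxLikelihood_le_iSup_maxLogRatio hM_ne hM_nonneg hM_sum
      (nml_nonneg hM_nonneg) (sum_nml hM_ne hM_nonneg hM_sum)
      fun p hp y => eq_zero_of_nml_eq_zero hM_ne hM_nonneg hM_sum hp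
end

section
/- Combined performance–leakage bound: let f(·|x) be a conditional distribution on a finite set Y, Θ' a nonempty parameter set indexing strictly positive distributions p_θ(·|x), and let h_NML(x) = argmax_y sup_{θ∈Θ'} p_θ(y|x) and h_MAP(x) = argmax_y f(y|x). Then (1 - f(h_NML(x)|x)) - (1 - f(h_MAP(x)|x)) ≤ exp( Δ + L ) - 1, where Δ = inf_{θ∈Θ'} max_{y∈Y} ln(f(y|x)/p_θ(y|x)) and L = ln Σ_{y∈Y} sup_{θ∈Θ'} p_θ(y|x). -/
/-!
For every `θ`, with `D_θ = max_y ln (f y / p θ y)` we have `f ≤ e^{D_θ} p θ ≤ e^{D_θ} g`, where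
`g y = sup_θ p θ y`. Summing over `y ≠ yNML` bounds `1 - f yNML` by `e^{D_θ} (Σ g - g yNML)`,
and `f yMAP ≤ e^{D_θ} g yMAP ≤ e^{D_θ} g yNML` because `yNML` maximizes `g`. Hence
`1 - f yNML + f yMAP ≤ e^{D_θ + L}`, and taking the infimum over `θ` gives the bound with `Δ`.
-/

open Finset Real

lemma le_exp_log_div_mul {a b : ℝ} (hb : 0 < b) : a ≤ exp (log (a / b)) * b := by
  rcases le_or_gt a 0 with ha | ha
  · exact ha.trans (by positivity)
  · rw [exp_log (div_pos ha hb), div_mul_cancel₀ a hb.ne']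

lemma le_exp_sup'_log_div_mul {Y : Type*} [Fintype Y] [Nonempty Y] (f q : Y → ℝ)
    (hq : ∀ y, 0 < q y) (y : Y) :
    f y ≤ exp (univ.sup' univ_nonempty (fun y => log (f y / q y))) * q y :=
  (le_exp_log_div_mul (hq y)).trans <| mul_le_mul_of_nonneg_right
    (exp_le_exp.2 (le_sup' (fun y => log (f y / q y)) (mem_univ y))) (hq y).le

lemma apply_le_one_of_sum_eq_one {Y : Type*} [Fintype Y] {q : Y → ℝ} (hq : ∀ y, 0 ≤ q y)
    (hq_sum : ∑ y, q y = 1) (y : Y) : q y ≤ 1 :=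
  hq_sum ▸ single_le_sum (fun y _ => hq y) (mem_univ y)

lemma one_sub_add_le_mul_sum {Y : Type*} [Fintype Y] {f g : Y → ℝ} {c : ℝ} (hc : 0 ≤ c)
    (hf_sum : ∑ y, f y = 1) (hfg : ∀ y, f y ≤ c * g y) {y₀ : Y} (hy₀ : ∀ y, g y ≤ g y₀)
    (y₁ : Y) : 1 - f y₀ + f y₁ ≤ c * ∑ y, g y := by
  classical
  have h_rest : ∑ y ∈ univ.erase y₀, f y ≤ c * ∑ y ∈ univ.erase y₀, g y := by
    rw [mul_sum]
    exact sum_le_sum fun y _ => hfg y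
  have h_top : f y₁ ≤ c * g y₀ := (hfg y₁).trans (mul_le_mul_of_nonneg_left (hy₀ y₁) hc)
  rw [← add_sum_erase _ _ (mem_univ y₀)] at hf_sum ⊢
  linarith

theorem nml_performance_leakage_bound_general
    {T : Type*} {Y : Type*} [Fintype Y] [Nonempty Y]
    (f : Y → ℝ) (hf_sum : ∑ y, f y = 1)
    (p : T → Y → ℝ)
    (hp_pos : ∀ θ y, 0 < p θ y) (hp_sum : ∀ θ, ∑ y, p θ y = 1)
    (Θ' : Set T) (hΘ' : Θ'.Nonempty)
    (yNML : Y) (hyNML : ∀ y, (⨆ θ : Θ', p θ y) ≤ ⨆ θ : Θ', p θ yNML)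
    (yMAP : Y) (hyMAP : ∀ y, f y ≤ f yMAP)
    (Δ L : ℝ)
    (hΔ : Δ = ⨅ θ : Θ', Finset.univ.sup' Finset.univ_nonempty
        (fun y => Real.log (f y / p θ y)))
    (hL : L = Real.log (∑ y, ⨆ θ : Θ', p θ y)) :
    (1 - f yNML) - (1 - f yMAP) ≤ Real.exp (Δ + L) - 1 := by
  have : Nonempty Θ' := hΘ'.to_subtype
  set g : Y → ℝ := fun y => ⨆ θ : Θ', p θ y
  have hp_le_g (θ : Θ') (y : Y) : p θ y ≤ g y := by
    refine le_ciSup (f := fun θ : Θ' => p θ y) ⟨1, ?_⟩ θ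
    rintro _ ⟨θ', rfl⟩
    exact apply_le_one_of_sum_eq_one (fun y => (hp_pos θ' y).le) (hp_sum θ') y
  have hg_sum_pos : 0 < ∑ y, g y :=
    sum_pos (fun y _ => (hp_pos _ y).trans_le (hp_le_g (Classical.arbitrary _) y)) univ_nonempty
  have hgap_pos : 0 < 1 - f yNML + f yMAP := by linarith [hyMAP yNML]
  have hlog_le (θ : Θ') : log (1 - f yNML + f yMAP) - L ≤
      univ.sup' univ_nonempty (fun y => log (f y / p θ y)) := by
    have := one_sub_add_le_mul_sum (exp_pos _).le hf_sum
      (fun y => (le_exp_sup'_log_div_mul f (p θ) (hp_pos θ) y).trans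
        (mul_le_mul_of_nonneg_left (hp_le_g θ y) (exp_pos _).le)) hyNML yMAP
    rw [← log_le_log_iff hgap_pos (by positivity), log_mul (exp_pos _).ne' hg_sum_pos.ne',
      log_exp] at this
    rw [hL]
    linarith
  have := (log_le_iff_le_exp hgap_pos).1 (sub_le_iff_le_add.1 (hΔ ▸ le_ciInf hlog_le))
  linarith

/-- **Combined performance–leakage bound (Theorem 1 of the paper).**
`Y` is a finite set of classes; `f` (i.e. `f(·|x)`) is a probability mass function
on `Y`, and `{p θ : θ ∈ Θ'}` (i.e. `p_θ(·|x)`) is a nonempty family of strictly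
positive probability mass functions on `Y`. Let `yNML` be a maximizer of
`y ↦ sup_{θ∈Θ'} p θ y` (the NML decision) and `yMAP` a maximizer of `f` (the MAP
decision). With the approximation error `Δ = inf_{θ∈Θ'} max_y ln (f y / p θ y)` and
the maximal leakage `L = ln Σ_y sup_{θ∈Θ'} p θ y`, the misclassification gap
satisfies `(1 - f yNML) - (1 - f yMAP) ≤ exp (Δ + L) - 1`. -/
theorem nml_performance_leakage_bound
    {T : Type*} {Y : Type*} [Fintype Y] [Nonempty Y]
    (f : Y → ℝ) (hf_nonneg : ∀ y, 0 ≤ f y) (hf_sum : ∑ y, f y = 1)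
    (p : T → Y → ℝ)
    (hp_pos : ∀ θ y, 0 < p θ y) (hp_sum : ∀ θ, ∑ y, p θ y = 1)
    (Θ' : Set T) (hΘ' : Θ'.Nonempty)
    (yNML : Y) (hyNML : ∀ y, (⨆ θ : Θ', p θ y) ≤ ⨆ θ : Θ', p θ yNML)
    (yMAP : Y) (hyMAP : ∀ y, f y ≤ f yMAP)
    (Δ L : ℝ)
    (hΔ : Δ = ⨅ θ : Θ', Finset.univ.sup' Finset.univ_nonempty
        (fun y => Real.log (f y / p θ y)))
    (hL : L = Real.log (∑ y, ⨆ θ : Θ', p θ y)) :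
    (1 - f yNML) - (1 - f yMAP) ≤ Real.exp (Δ + L) - 1 :=
  nml_performance_leakage_bound_general f hf_sum p hp_pos hp_sum Θ' hΘ' yNML hyNML yMAP hyMAP Δ L hΔ
    hL
end

section
/- Ball-support leakage bound: let Θ' ⊆ ℝ^d be contained in a ball of radius ρ around some point θ̂, so that any two points of Θ' are within distance 2ρ. If the Fisher matrix eigenvalues over the convex hull of Θ' are bounded by σ* = sup_{‖θ-θ̂‖<ρ} σ_max(θ|x), then exp(L(Θ')) ≤ 1 + 2ρ K √(σ*), where K = |Y|. -/
/-!
At each point of the ball the Fisher matrix controls every directional derivative of every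
probability `p_y`: since `0 < p_y ≤ 1`,
`(∂_v p_y)² = p_y² (∂_v log p_y)² ≤ p_y (∂_v log p_y)² ≤ vᵀ I v ≤ σ*` for a unit vector `v`.
So each `p_y` is `√σ*`-Lipschitz on the ball, whose diameter is at most `2ρ`. Hence for any
`θ₀ ∈ Θ'`, `sup_{Θ'} p_y ≤ p_{θ₀}(y) + 2ρ√σ*`, and summing over the `K` outcomes gives
`Σ_y sup_{Θ'} p_y ≤ 1 + 2ρK√σ*`; the same comparison with `θ₀` makes the sum positive, so the
logarithm is harmless.
-/

/-- The largest eigenvalue of a real symmetric positive semidefinite `d × d` matrix,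
characterized as the supremum of the Rayleigh quotient over Euclidean unit vectors. -/
noncomputable def sigmaMax {d : ℕ} (M : Matrix (Fin d) (Fin d) ℝ) : ℝ :=
  sSup {r : ℝ | ∃ v : EuclideanSpace ℝ (Fin d), ‖v‖ = 1 ∧
    r = dotProduct (fun i => v i) (M.mulVec (fun i => v i))}

open Finset

section

variable {d : ℕ}

lemma le_sigmaMax (M : Matrix (Fin d) (Fin d) ℝ) {v : EuclideanSpace ℝ (Fin d)} (hv : ‖v‖ = 1) :
    dotProduct (fun i => v i) (M.mulVec (fun i => v i)) ≤ sigmaMax M := by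
  refine le_csSup ?_ ⟨v, hv, rfl⟩
  have hcont : Continuous fun w : EuclideanSpace ℝ (Fin d) =>
      dotProduct (fun i => w i) (M.mulVec (fun i => w i)) := by
    simp only [dotProduct, Matrix.mulVec]
    fun_prop
  refine ((isCompact_sphere (0 : EuclideanSpace ℝ (Fin d)) 1).image hcont).bddAbove.mono ?_
  rintro r ⟨w, hw, rfl⟩
  exact ⟨w, mem_sphere_zero_iff_norm.2 hw, rfl⟩

lemma ContinuousLinearMap.apply_eq_sum_mul_single (L : EuclideanSpace ℝ (Fin d) →L[ℝ] ℝ)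
    (v : EuclideanSpace ℝ (Fin d)) :
    L v = ∑ i, v i * L (WithLp.toLp 2 (Pi.single i 1)) := by
  conv_lhs => rw [← (EuclideanSpace.basisFun (Fin d) ℝ).sum_repr v]
  simp [map_sum, smul_eq_mul]

lemma dotProduct_mulVec_eq_sum_mul_sq {ι : Type*} [Fintype ι] {M : Matrix (Fin d) (Fin d) ℝ}
    (w : ι → ℝ) (L : ι → EuclideanSpace ℝ (Fin d) →L[ℝ] ℝ)
    (hM : ∀ i j, M i j = ∑ y, w y * L y (WithLp.toLp 2 (Pi.single i 1)) *
      L y (WithLp.toLp 2 (Pi.single j 1)))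
    (v : EuclideanSpace ℝ (Fin d)) :
    dotProduct (fun i => v i) (M.mulVec (fun i => v i)) = ∑ y, w y * L y v ^ 2 := by
  have hLv : ∀ y, L y v = ∑ i, v i * L y (WithLp.toLp 2 (Pi.single i 1)) :=
    fun y => (L y).apply_eq_sum_mul_single v
  simp only [dotProduct, Matrix.mulVec, hM, sq, hLv, sum_mul, mul_sum]
  exact ((sum_congr rfl fun i _ => sum_comm).trans sum_comm).trans
    (sum_congr rfl fun y _ => sum_congr rfl fun i _ => sum_congr rfl fun j _ => by ring)

lemma sq_le_sum_mul_inv_mul_sq {ι : Type*} [Fintype ι] {q : ι → ℝ} (hq : ∀ j, 0 < q j)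
    (a : ι → ℝ) {i : ι} (hqi : q i ≤ 1) :
    a i ^ 2 ≤ ∑ j, q j * ((q j)⁻¹ * a j) ^ 2 := by
  have hterm : ∀ j, q j * ((q j)⁻¹ * a j) ^ 2 = a j ^ 2 / q j := fun j => by
    field_simp [(hq j).ne']
  calc a i ^ 2 ≤ a i ^ 2 / q i := le_div_self (sq_nonneg _) (hq i) hqi
    _ ≤ ∑ j, a j ^ 2 / q j :=
      single_le_sum (f := fun j => a j ^ 2 / q j) (fun j _ => div_nonneg (sq_nonneg _) (hq j).le)
        (mem_univ i)
    _ = _ := by simp only [hterm]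

lemma norm_fderivWithin_le_sqrt_of_sigmaMax_le {Y : Type*} [Fintype Y]
    {p : EuclideanSpace ℝ (Fin d) → Y → ℝ} {s : Set (EuclideanSpace ℝ (Fin d))} (hs : IsOpen s)
    {θ : EuclideanSpace ℝ (Fin d)} (hθ : θ ∈ s) (hpos : ∀ y, 0 < p θ y)
    (hdiff : ∀ y, DifferentiableWithinAt ℝ (fun t => p t y) s θ)
    {M : Matrix (Fin d) (Fin d) ℝ}
    (hM : ∀ i j, M i j = ∑ y, p θ y *
        fderivWithin ℝ (fun t => Real.log (p t y)) s θ (WithLp.toLp 2 (Pi.single i 1)) *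
        fderivWithin ℝ (fun t => Real.log (p t y)) s θ (WithLp.toLp 2 (Pi.single j 1)))
    {σ : ℝ} (hσ : sigmaMax M ≤ σ) {y : Y} (hle : p θ y ≤ 1) :
    ‖fderivWithin ℝ (fun t => p t y) s θ‖ ≤ √σ := by
  have hlog : ∀ y, fderivWithin ℝ (fun t => Real.log (p t y)) s θ =
      (p θ y)⁻¹ • fderivWithin ℝ (fun t => p t y) s θ := fun y =>
    fderivWithin.log (hdiff y) (hpos y).ne' (hs.uniqueDiffWithinAt hθ)
  refine ContinuousLinearMap.opNorm_le_of_unit_norm (Real.sqrt_nonneg σ) fun v hv => ?_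
  refine Real.abs_le_sqrt ?_
  calc fderivWithin ℝ (fun t => p t y) s θ v ^ 2
      ≤ ∑ y, p θ y * ((p θ y)⁻¹ * fderivWithin ℝ (fun t => p t y) s θ v) ^ 2 :=
        sq_le_sum_mul_inv_mul_sq hpos (fun y => fderivWithin ℝ (fun t => p t y) s θ v) hle
    _ = dotProduct (fun i => v i) (M.mulVec (fun i => v i)) := by
        rw [dotProduct_mulVec_eq_sum_mul_sq _ _ hM v]
        simp only [hlog, _root_.smul_apply, smul_eq_mul]
    _ ≤ σ := (le_sigmaMax M hv).trans hσ

lemma le_add_two_mul_mul_of_norm_fderivWithin_le {E : Type*} [NormedAddCommGroup E]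
    [NormedSpace ℝ E] {f : E → ℝ} {c : E} {ρ C : ℝ}
    (hf : DifferentiableOn ℝ f (Metric.ball c ρ))
    (hC : ∀ x ∈ Metric.ball c ρ, ‖fderivWithin ℝ f (Metric.ball c ρ) x‖ ≤ C)
    {x y : E} (hx : x ∈ Metric.ball c ρ) (hy : y ∈ Metric.ball c ρ) :
    f x ≤ f y + 2 * ρ * C := by
  have hC0 : 0 ≤ C := (norm_nonneg _).trans (hC x hx)
  have hxy : ‖x - y‖ ≤ 2 * ρ := by
    rw [← dist_eq_norm]
    linarith [dist_triangle_right x y c, Metric.mem_ball.1 hx, Metric.mem_ball.1 hy]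
  have hmv : |f x - f y| ≤ C * ‖x - y‖ :=
    (convex_ball c ρ).norm_image_sub_le_of_norm_fderivWithin_le hf hC hy hx
  linarith [le_abs_self (f x - f y), mul_le_mul_of_nonneg_left hxy hC0]

theorem ball_support_leakage_bound_general
    {d : ℕ} {Y : Type*} [Fintype Y]
    (p : EuclideanSpace ℝ (Fin d) → Y → ℝ)
    (θhat : EuclideanSpace ℝ (Fin d)) (ρ : ℝ)
    (Θ' : Set (EuclideanSpace ℝ (Fin d))) (hne : Θ'.Nonempty)
    (hball : Θ' ⊆ Metric.ball θhat ρ)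
    (hpos : ∀ θ ∈ Metric.ball θhat ρ, ∀ y, 0 < p θ y)
    (hsum : ∀ θ ∈ Metric.ball θhat ρ, ∑ y, p θ y = 1)
    (hC2 : ∀ y, ContDiffOn ℝ 2 (fun θ => p θ y) (Metric.ball θhat ρ))
    (FI : EuclideanSpace ℝ (Fin d) → Matrix (Fin d) (Fin d) ℝ)
    (hFI : ∀ θ ∈ Metric.ball θhat ρ, ∀ i j, FI θ i j =
      ∑ y, p θ y *
        (fderivWithin ℝ (fun t => Real.log (p t y)) (Metric.ball θhat ρ) θ (WithLp.toLp 2 (Pi.single i 1))) *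
        (fderivWithin ℝ (fun t => Real.log (p t y)) (Metric.ball θhat ρ) θ (WithLp.toLp 2 (Pi.single j 1))))
    (σstar : ℝ) (hσ : ∀ θ ∈ Metric.ball θhat ρ, sigmaMax (FI θ) ≤ σstar) :
    Real.exp (Real.log (∑ y, ⨆ θ : Θ', p θ y)) ≤
      1 + 2 * ρ * (Fintype.card Y : ℝ) * Real.sqrt σstar := by
  have hdiff : ∀ y, DifferentiableOn ℝ (fun θ => p θ y) (Metric.ball θhat ρ) :=
    fun y => (hC2 y).differentiableOn two_ne_zero
  have hle : ∀ θ ∈ Metric.ball θhat ρ, ∀ y, p θ y ≤ 1 := fun θ hθ y =>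
    hsum θ hθ ▸ single_le_sum (fun y' _ => (hpos θ hθ y').le) (mem_univ y)
  have hgrad : ∀ y, ∀ θ ∈ Metric.ball θhat ρ,
      ‖fderivWithin ℝ (fun t => p t y) (Metric.ball θhat ρ) θ‖ ≤ √σstar := fun y θ hθ =>
    norm_fderivWithin_le_sqrt_of_sigmaMax_le Metric.isOpen_ball hθ (hpos θ hθ)
      (fun y => hdiff y θ hθ) (hFI θ hθ) (hσ θ hθ) (hle θ hθ y)
  obtain ⟨θ₀, hθ₀⟩ := hne
  have : Nonempty Θ' := ⟨⟨θ₀, hθ₀⟩⟩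
  have hclose : ∀ y, ∀ θ : Θ', p θ y ≤ p θ₀ y + 2 * ρ * √σstar := fun y θ =>
    le_add_two_mul_mul_of_norm_fderivWithin_le (hdiff y) (hgrad y) (hball θ.2) (hball hθ₀)
  have hsup_le : ∀ y, ⨆ θ : Θ', p θ y ≤ p θ₀ y + 2 * ρ * √σstar :=
    fun y => ciSup_le (hclose y)
  have hsup_ge : ∀ y, p θ₀ y ≤ ⨆ θ : Θ', p θ y :=
    fun y => le_ciSup (f := fun θ : Θ' => p θ y) ⟨_, Set.forall_mem_range.2 (hclose y)⟩ ⟨θ₀, hθ₀⟩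
  have hsum_pos : 0 < ∑ y, ⨆ θ : Θ', p θ y :=
    zero_lt_one.trans_le (hsum θ₀ (hball hθ₀) ▸ sum_le_sum fun y _ => hsup_ge y)
  rw [Real.exp_log hsum_pos]
  calc ∑ y, ⨆ θ : Θ', p θ y ≤ ∑ y, (p θ₀ y + 2 * ρ * √σstar) := sum_le_sum fun y _ => hsup_le y
    _ = 1 + 2 * ρ * (Fintype.card Y : ℝ) * √σstar := by
      rw [sum_add_distrib, hsum θ₀ (hball hθ₀), sum_const, card_univ, nsmul_eq_mul]
      ring

/-- **Ball-support leakage bound.** `Y` is a finite set of cardinality `K`;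
`{p θ}` is a smooth (twice continuously differentiable) family of strictly positive
probability mass functions on `Y`, defined on the ball `{θ : ‖θ - θ̂‖ < ρ}` which
contains `Θ'` (and hence its convex hull), with Fisher information matrix `FI`
(hypothesis `hFI`). The suprema defining the maximal leakage
`L(Θ') = ln Σ_y sup_{θ∈Θ'} p θ y` are attained on `Θ'` (hypothesis `hattain`), and
the Fisher eigenvalues on the ball are bounded by
`σ* ≥ sup_{‖θ-θ̂‖<ρ} σ_max(FI θ)`. Then `exp (L(Θ')) ≤ 1 + 2ρK√(σ*)`. -/
theorem ball_support_leakage_bound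
    {d : ℕ} {Y : Type*} [Fintype Y] [Nonempty Y]
    (p : EuclideanSpace ℝ (Fin d) → Y → ℝ)
    (θhat : EuclideanSpace ℝ (Fin d)) (ρ : ℝ) (hρ : 0 < ρ)
    (Θ' : Set (EuclideanSpace ℝ (Fin d))) (hne : Θ'.Nonempty)
    (hball : Θ' ⊆ Metric.ball θhat ρ)
    (hpos : ∀ θ ∈ Metric.ball θhat ρ, ∀ y, 0 < p θ y)
    (hsum : ∀ θ ∈ Metric.ball θhat ρ, ∑ y, p θ y = 1)
    (hC2 : ∀ y, ContDiffOn ℝ 2 (fun θ => p θ y) (Metric.ball θhat ρ))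
    (FI : EuclideanSpace ℝ (Fin d) → Matrix (Fin d) (Fin d) ℝ)
    (hFI : ∀ θ ∈ Metric.ball θhat ρ, ∀ i j, FI θ i j =
      ∑ y, p θ y *
        (fderivWithin ℝ (fun t => Real.log (p t y)) (Metric.ball θhat ρ) θ (WithLp.toLp 2 (Pi.single i 1))) *
        (fderivWithin ℝ (fun t => Real.log (p t y)) (Metric.ball θhat ρ) θ (WithLp.toLp 2 (Pi.single j 1))))
    (σstar : ℝ) (hσ : ∀ θ ∈ Metric.ball θhat ρ, sigmaMax (FI θ) ≤ σstar)
    (hattain : ∀ y : Y, ∃ θ ∈ Θ', ∀ θ' ∈ Θ', p θ' y ≤ p θ y) :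
    Real.exp (Real.log (∑ y, ⨆ θ : Θ', p θ y)) ≤
      1 + 2 * ρ * (Fintype.card Y : ℝ) * Real.sqrt σstar :=
  ball_support_leakage_bound_general p θhat ρ Θ' hne hball hpos hsum hC2 FI hFI σstar hσ
end
end

section
/- Averaged (heuristic) bound via trace: under the conditions of the well-specified bound holding for each x, and with T(θ|x) the trace of the Fisher matrix satisfying σ_max(θ|x) ≤ T(θ|x), the averaged performance gap satisfies E_X[ E(h_NML; X, z^n) ] − E_X[ E(h_MAP; X) ] ≤ 2ρK √( E_X[ T*(X) ] ), where T*(x) bounds T(θ|x) on Θ'. -/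
open Real MeasureTheory

theorem OrthonormalBasis.norm_dual_eq_sqrt_sum_sq {ι E : Type*} [Fintype ι]
    [NormedAddCommGroup E] [InnerProductSpace ℝ E] [CompleteSpace E]
    (b : OrthonormalBasis ι ℝ E) (L : StrongDual ℝ E) : ‖L‖ = √(∑ i, L (b i) ^ 2) := by
  set w := (InnerProductSpace.toDual ℝ E).symm L
  have hL : ∀ i, L (b i) = inner ℝ (b i) w := fun i => by
    rw [real_inner_comm, InnerProductSpace.toDual_symm_apply]
  simp_rw [hL, b.sum_sq_inner_right, Real.sqrt_sq (norm_nonneg _)]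
  exact ((InnerProductSpace.toDual ℝ E).symm.norm_map L).symm

theorem le_one_of_sum_eq_one {Y : Type*} [Fintype Y] {q : Y → ℝ} (hq0 : ∀ y, 0 ≤ q y)
    (hq1 : ∑ y, q y = 1) (y : Y) : q y ≤ 1 :=
  hq1 ▸ Finset.single_le_sum (fun y' _ => hq0 y') (Finset.mem_univ y)

theorem sq_mul_le_sum_mul_sq {Y : Type*} [Fintype Y] {q : Y → ℝ} (a : Y → ℝ)
    (hq0 : ∀ y, 0 ≤ q y) (hq1 : ∑ y, q y = 1) (y : Y) :
    (q y * a y) ^ 2 ≤ ∑ y', q y' * a y' ^ 2 := by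
  have hterm : ∀ y', 0 ≤ q y' * a y' ^ 2 := fun y' => mul_nonneg (hq0 y') (sq_nonneg _)
  calc (q y * a y) ^ 2 = q y * (q y * a y ^ 2) := by ring
    _ ≤ q y * a y ^ 2 := mul_le_of_le_one_left (hterm y) (le_one_of_sum_eq_one hq0 hq1 y)
    _ ≤ ∑ y', q y' * a y' ^ 2 :=
      Finset.single_le_sum (f := fun y' => q y' * a y' ^ 2) (fun y' _ => hterm y')
        (Finset.mem_univ y)

theorem hasFDerivWithinAt_smul_fderivWithin_log {E : Type*} [NormedAddCommGroup E]
    [NormedSpace ℝ E] {f : E → ℝ} {s : Set E} {x : E} (hf : DifferentiableWithinAt ℝ f s x)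
    (hpos : ∀ y ∈ s, 0 < f y) (hx : x ∈ s) :
    HasFDerivWithinAt f (f x • fderivWithin ℝ (fun y => log (f y)) s x) s x := by
  have hlog : DifferentiableWithinAt ℝ (fun y => log (f y)) s x := hf.log (hpos x hx).ne'
  have := (hasDerivAt_exp (log (f x))).comp_hasFDerivWithinAt x hlog.hasFDerivWithinAt
  rw [exp_log (hpos x hx)] at this
  exact this.congr (fun y hy => (exp_log (hpos y hy)).symm) (exp_log (hpos x hx)).symm

theorem sqrt_le_abs_add_one (t : ℝ) : √t ≤ |t| + 1 := by
  have h := Real.sq_sqrt (abs_nonneg t)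
  calc √t ≤ √|t| := Real.sqrt_le_sqrt (le_abs_self t)
    _ ≤ |t| + 1 := by nlinarith [sq_nonneg (√|t| - 1)]

theorem MeasureTheory.Integrable.sqrt {α : Type*} [MeasurableSpace α] {μ : Measure α}
    [IsFiniteMeasure μ] {f : α → ℝ} (hf : Integrable f μ) : Integrable (fun x => √(f x)) μ := by
  refine (hf.abs.add (integrable_const 1)).mono'
    (continuous_sqrt.comp_aestronglyMeasurable hf.aestronglyMeasurable) (ae_of_all _ fun x => ?_)
  rw [Real.norm_of_nonneg (Real.sqrt_nonneg _)]
  exact sqrt_le_abs_add_one (f x)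

theorem integral_sqrt_le_sqrt_integral {α : Type*} [MeasurableSpace α] {μ : Measure α}
    [IsProbabilityMeasure μ] {f : α → ℝ} (hf0 : 0 ≤ᵐ[μ] f) (hf : Integrable f μ) :
    ∫ x, √(f x) ∂μ ≤ √(∫ x, f x ∂μ) :=
  strictConcaveOn_sqrt.concaveOn.le_map_integral continuous_sqrt.continuousOn isClosed_Ici
    hf0 hf hf.sqrt

theorem sub_le_of_iSup_le_iSup {ι Y : Type*} [Nonempty ι] {g : ι → Y → ℝ} {a b : Y} {C : ℝ}
    (hbdd : BddAbove (Set.range fun i => g i a)) (hab : ⨆ i, g i a ≤ ⨆ i, g i b) (i₀ : ι)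
    (hC : ∀ i, g i b - g i₀ b ≤ C) : g i₀ a - g i₀ b ≤ C := by
  have : g i₀ a ≤ g i₀ b + C :=
    calc g i₀ a ≤ ⨆ i, g i a := le_ciSup hbdd i₀
      _ ≤ ⨆ i, g i b := hab
      _ ≤ g i₀ b + C := ciSup_le fun i => by linarith [hC i]
  linarith

section Fisher

variable {d : ℕ} {Y : Type*} [Fintype Y]

noncomputable def fisherInfo (q : EuclideanSpace ℝ (Fin d) → Y → ℝ)
    (s : Set (EuclideanSpace ℝ (Fin d))) (θ : EuclideanSpace ℝ (Fin d)) :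
    Matrix (Fin d) (Fin d) ℝ :=
  Matrix.of fun i j => ∑ y, q θ y *
    fderivWithin ℝ (fun t => log (q t y)) s θ (WithLp.toLp 2 (Pi.single i 1)) *
      fderivWithin ℝ (fun t => log (q t y)) s θ (WithLp.toLp 2 (Pi.single j 1))

variable {q : EuclideanSpace ℝ (Fin d) → Y → ℝ} {s : Set (EuclideanSpace ℝ (Fin d))}

theorem trace_fisherInfo_eq (θ : EuclideanSpace ℝ (Fin d)) :
    (fisherInfo q s θ).trace = ∑ i, ∑ y, q θ y *
      fderivWithin ℝ (fun t => log (q t y)) s θ (EuclideanSpace.basisFun (Fin d) ℝ i) ^ 2 := by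
  simp [Matrix.trace, fisherInfo, sq, mul_assoc]

theorem trace_fisherInfo_nonneg {θ : EuclideanSpace ℝ (Fin d)} (hq : ∀ y, 0 ≤ q θ y) :
    0 ≤ (fisherInfo q s θ).trace := by
  rw [trace_fisherInfo_eq]
  exact Finset.sum_nonneg fun i _ => Finset.sum_nonneg fun y _ =>
    mul_nonneg (hq y) (sq_nonneg _)

theorem norm_smul_fderivWithin_log_le_sqrt_trace_fisherInfo {θ : EuclideanSpace ℝ (Fin d)}
    (hq0 : ∀ y, 0 ≤ q θ y) (hq1 : ∑ y, q θ y = 1) (y : Y) :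
    ‖q θ y • fderivWithin ℝ (fun t => log (q t y)) s θ‖ ≤ √(fisherInfo q s θ).trace := by
  rw [(EuclideanSpace.basisFun (Fin d) ℝ).norm_dual_eq_sqrt_sum_sq, trace_fisherInfo_eq]
  gcongr with i
  exact sq_mul_le_sum_mul_sq (fun y' => fderivWithin ℝ (fun t => log (q t y')) s θ _) hq0 hq1 y

theorem abs_sub_le_of_trace_fisherInfo_le (hs : Convex ℝ s) (hpos : ∀ θ ∈ s, ∀ y, 0 < q θ y)
    (hsum : ∀ θ ∈ s, ∑ y, q θ y = 1) (hdiff : ∀ y, DifferentiableOn ℝ (fun θ => q θ y) s)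
    {T : ℝ} (hT : ∀ θ ∈ s, (fisherInfo q s θ).trace ≤ T)
    {θ θ' : EuclideanSpace ℝ (Fin d)} (hθ : θ ∈ s) (hθ' : θ' ∈ s) (y : Y) :
    |q θ y - q θ' y| ≤ √T * ‖θ - θ'‖ := by
  have := hs.norm_image_sub_le_of_norm_hasFDerivWithin_le
    (fun t ht => hasFDerivWithinAt_smul_fderivWithin_log (hdiff y t ht)
      (fun t' ht' => hpos t' ht' y) ht)
    (fun t ht => (norm_smul_fderivWithin_log_le_sqrt_trace_fisherInfo
      (fun y' => (hpos t ht y').le) (hsum t ht) y).trans (Real.sqrt_le_sqrt (hT t ht)))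
    hθ' hθ
  rwa [Real.norm_eq_abs] at this

theorem sub_le_of_iSup_le_iSup_of_trace_fisherInfo_le (hs : Convex ℝ s)
    (hpos : ∀ θ ∈ s, ∀ y, 0 < q θ y) (hsum : ∀ θ ∈ s, ∑ y, q θ y = 1)
    (hdiff : ∀ y, DifferentiableOn ℝ (fun θ => q θ y) s) {ρ : ℝ}
    (hdiam : ∀ θ₁ ∈ s, ∀ θ₂ ∈ s, ‖θ₁ - θ₂‖ ≤ 2 * ρ) {T : ℝ}
    (hT : ∀ θ ∈ s, (fisherInfo q s θ).trace ≤ T) {θ₀ : EuclideanSpace ℝ (Fin d)} (hθ₀ : θ₀ ∈ s)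
    {a b : Y} (hab : ⨆ θ : s, q θ a ≤ ⨆ θ : s, q θ b) : q θ₀ a - q θ₀ b ≤ 2 * ρ * √T := by
  have : Nonempty s := ⟨⟨θ₀, hθ₀⟩⟩
  refine sub_le_of_iSup_le_iSup (g := fun (θ : s) => q θ) ⟨1, ?_⟩ hab ⟨θ₀, hθ₀⟩ fun θ => ?_
  · rintro _ ⟨θ, rfl⟩
    exact le_one_of_sum_eq_one (fun y => (hpos θ θ.2 y).le) (hsum θ θ.2) a
  · calc q θ b - q θ₀ b ≤ √T * ‖(θ : EuclideanSpace ℝ (Fin d)) - θ₀‖ :=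
          (le_abs_self _).trans (abs_sub_le_of_trace_fisherInfo_le hs hpos hsum hdiff hT θ.2 hθ₀ b)
      _ ≤ √T * (2 * ρ) := by gcongr; exact hdiam θ θ.2 θ₀ hθ₀
      _ = 2 * ρ * √T := mul_comm _ _

end Fisher

theorem averaged_nml_performance_bound_general
    {d : ℕ} {Y : Type*} [Fintype Y] [Nonempty Y]
    {X : Type*} [MeasurableSpace X] (μ : MeasureTheory.Measure X)
    [MeasureTheory.IsProbabilityMeasure μ]
    (p : EuclideanSpace ℝ (Fin d) → X → Y → ℝ)
    (Θ' : Set (EuclideanSpace ℝ (Fin d))) (hconv : Convex ℝ Θ')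
    (ρ : ℝ) (hρ : 0 < ρ)
    (hdiam : ∀ θ₁ ∈ Θ', ∀ θ₂ ∈ Θ', ‖θ₁ - θ₂‖ ≤ 2 * ρ)
    (θ₀ : EuclideanSpace ℝ (Fin d)) (hθ₀ : θ₀ ∈ Θ')
    (hpos : ∀ θ ∈ Θ', ∀ x y, 0 < p θ x y) (hsum : ∀ θ ∈ Θ', ∀ x, ∑ y, p θ x y = 1)
    (hC2 : ∀ x y, ContDiffOn ℝ 2 (fun θ => p θ x y) Θ')
    (FI : EuclideanSpace ℝ (Fin d) → X → Matrix (Fin d) (Fin d) ℝ)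
    (hFI : ∀ θ ∈ Θ', ∀ x, ∀ i j, FI θ x i j =
      ∑ y, p θ x y * (fderivWithin ℝ (fun t => Real.log (p t x y)) Θ' θ (WithLp.toLp 2 (Pi.single i 1))) *
        (fderivWithin ℝ (fun t => Real.log (p t x y)) Θ' θ (WithLp.toLp 2 (Pi.single j 1))))
    (Tstar : X → ℝ) (hT : ∀ θ ∈ Θ', ∀ x, Matrix.trace (FI θ x) ≤ Tstar x)
    (hTstar_int : MeasureTheory.Integrable Tstar μ)
    (hNML : X → Y) (hNML_spec : ∀ x y, (⨆ θ : Θ', p θ x y) ≤ ⨆ θ : Θ', p θ x (hNML x))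
    (hMAP : X → Y)
    (hNML_int : MeasureTheory.Integrable (fun x => 1 - p θ₀ x (hNML x)) μ)
    (hMAP_int : MeasureTheory.Integrable (fun x => 1 - p θ₀ x (hMAP x)) μ) :
    (∫ x, (1 - p θ₀ x (hNML x)) ∂μ) - (∫ x, (1 - p θ₀ x (hMAP x)) ∂μ) ≤
      2 * ρ * (Fintype.card Y : ℝ) * Real.sqrt (∫ x, Tstar x ∂μ) := by
  have hFI_eq : ∀ θ ∈ Θ', ∀ x, FI θ x = fisherInfo (fun t => p t x) Θ' θ := fun θ hθ x =>
    Matrix.ext (hFI θ hθ x)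
  have hTstar_nonneg : ∀ x, 0 ≤ Tstar x := fun x =>
    (hFI_eq θ₀ hθ₀ x ▸ trace_fisherInfo_nonneg fun y => (hpos θ₀ hθ₀ x y).le).trans (hT θ₀ hθ₀ x)
  have hgap : ∀ x, p θ₀ x (hMAP x) - p θ₀ x (hNML x) ≤ 2 * ρ * √(Tstar x) := fun x =>
    sub_le_of_iSup_le_iSup_of_trace_fisherInfo_le hconv (fun θ hθ => hpos θ hθ x)
      (fun θ hθ => hsum θ hθ x) (fun y => (hC2 x y).differentiableOn two_ne_zero) hdiam
      (fun θ hθ => hFI_eq θ hθ x ▸ hT θ hθ x) hθ₀ (hNML_spec x (hMAP x))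
  calc (∫ x, (1 - p θ₀ x (hNML x)) ∂μ) - (∫ x, (1 - p θ₀ x (hMAP x)) ∂μ)
      = ∫ x, ((1 - p θ₀ x (hNML x)) - (1 - p θ₀ x (hMAP x))) ∂μ :=
        (integral_sub hNML_int hMAP_int).symm
    _ ≤ ∫ x, 2 * ρ * √(Tstar x) ∂μ :=
        integral_mono (hNML_int.sub hMAP_int) (hTstar_int.sqrt.const_mul _)
          fun x => by linarith [hgap x]
    _ = 2 * ρ * ∫ x, √(Tstar x) ∂μ := integral_const_mul _ _
    _ ≤ 2 * ρ * √(∫ x, Tstar x ∂μ) := by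
        gcongr
        exact integral_sqrt_le_sqrt_integral (ae_of_all _ hTstar_nonneg) hTstar_int
    _ ≤ 2 * ρ * (Fintype.card Y : ℝ) * √(∫ x, Tstar x ∂μ) := by
        have hK : (1 : ℝ) ≤ Fintype.card Y := by exact_mod_cast Fintype.card_pos
        rw [mul_assoc _ (Fintype.card Y : ℝ)]
        gcongr
        exact le_mul_of_one_le_left (Real.sqrt_nonneg _) hK

/-- **Averaged (heuristic) performance bound via the Fisher trace.**
`Y` is a finite class set with `|Y| = K`, `X` an observation space carrying the
marginal probability measure `μ`. For each `x`, `{p θ x : θ ∈ Θ'}` is a smooth family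
of strictly positive conditional probability mass functions `p_θ(·|x)` on `Y`, with
`Θ' ⊆ ℝ^d` convex of diameter at most `2ρ` containing the true parameter `θ₀` (so
`f(·|x) = p θ₀ x` for every `x`). `FI θ x` is the Fisher information matrix
(hypothesis `hFI`), whose trace `T(θ|x)` dominates its largest eigenvalue
(hypothesis `hσT`) and is bounded on `Θ'` by `T*(x)` (hypothesis `hT`).
`hNML` is the NML decision rule (maximizing `y ↦ sup_{θ∈Θ'} p θ x y` at each `x`)
and `hMAP` the MAP rule (maximizing `p θ₀ x`). Then the averaged misclassification
gap satisfies
`E_X[1 - p θ₀ X (hNML X)] - E_X[1 - p θ₀ X (hMAP X)] ≤ 2ρK√(E_X[T*(X)])`. -/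
theorem averaged_nml_performance_bound
    {d : ℕ} {Y : Type*} [Fintype Y] [Nonempty Y]
    {X : Type*} [MeasurableSpace X] (μ : MeasureTheory.Measure X)
    [MeasureTheory.IsProbabilityMeasure μ]
    (p : EuclideanSpace ℝ (Fin d) → X → Y → ℝ)
    (Θ' : Set (EuclideanSpace ℝ (Fin d))) (hconv : Convex ℝ Θ')
    (ρ : ℝ) (hρ : 0 < ρ)
    (hdiam : ∀ θ₁ ∈ Θ', ∀ θ₂ ∈ Θ', ‖θ₁ - θ₂‖ ≤ 2 * ρ)
    (θ₀ : EuclideanSpace ℝ (Fin d)) (hθ₀ : θ₀ ∈ Θ')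
    (hpos : ∀ θ ∈ Θ', ∀ x y, 0 < p θ x y) (hsum : ∀ θ ∈ Θ', ∀ x, ∑ y, p θ x y = 1)
    (hC2 : ∀ x y, ContDiffOn ℝ 2 (fun θ => p θ x y) Θ')
    (FI : EuclideanSpace ℝ (Fin d) → X → Matrix (Fin d) (Fin d) ℝ)
    (hFI : ∀ θ ∈ Θ', ∀ x, ∀ i j, FI θ x i j =
      ∑ y, p θ x y * (fderivWithin ℝ (fun t => Real.log (p t x y)) Θ' θ (WithLp.toLp 2 (Pi.single i 1))) *
        (fderivWithin ℝ (fun t => Real.log (p t x y)) Θ' θ (WithLp.toLp 2 (Pi.single j 1))))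
    (hσT : ∀ θ ∈ Θ', ∀ x, sigmaMax (FI θ x) ≤ Matrix.trace (FI θ x))
    (Tstar : X → ℝ) (hT : ∀ θ ∈ Θ', ∀ x, Matrix.trace (FI θ x) ≤ Tstar x)
    (hTstar_int : MeasureTheory.Integrable Tstar μ)
    (hattain : ∀ x, ∀ y : Y, ∃ θ ∈ Θ', ∀ θ' ∈ Θ', p θ' x y ≤ p θ x y)
    (hNML : X → Y) (hNML_spec : ∀ x y, (⨆ θ : Θ', p θ x y) ≤ ⨆ θ : Θ', p θ x (hNML x))
    (hMAP : X → Y) (hMAP_spec : ∀ x y, p θ₀ x y ≤ p θ₀ x (hMAP x))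
    (hNML_int : MeasureTheory.Integrable (fun x => 1 - p θ₀ x (hNML x)) μ)
    (hMAP_int : MeasureTheory.Integrable (fun x => 1 - p θ₀ x (hMAP x)) μ) :
    (∫ x, (1 - p θ₀ x (hNML x)) ∂μ) - (∫ x, (1 - p θ₀ x (hMAP x)) ∂μ) ≤
      2 * ρ * (Fintype.card Y : ℝ) * Real.sqrt (∫ x, Tstar x ∂μ) :=
  averaged_nml_performance_bound_general μ p Θ' hconv ρ hρ hdiam θ₀ hθ₀ hpos hsum hC2 FI hFI Tstar
    hT hTstar_int hNML hNML_spec hMAP hNML_int hMAP_int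
end
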